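/- arXiv:1705.07256 — 2 statements merged into one kernel-verified Lean document; each statement's English description precedes it below -/
import Mathlib

section
/- Let C = {β ∈ ℝ^{p_bin} : at most s_G of the blocks β^j are nonzero, each block β^j lies in a closed cone S_j}, where β is partitioned into p blocks. Let p_L be the vector whose j-th block is the projection of x^j onto S_j. Then the projection of x onto C is obtained by keeping the s_G blocks of p_L with largest ℓ₂ norms and zeroing out the rest. Equivalently, P_C(x) = P_G(blockwise projections of x), using the cone-projection identity ‖x^j‖² = ‖P_{S_j}(x^j)‖² + ‖x^j − P_{S_j}(x^j)‖². -/
open scoped Classical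

def IsNearestPt {E : Type*} [MetricSpace E] (S : Set E) (x p : E) : Prop :=
  p ∈ S ∧ ∀ q ∈ S, dist x p ≤ dist x q

/-!
Every block of a point of `C` lies in the cone `S_j`, and the nearest point `P_{S_j}(x^j)` of a
cone satisfies `‖x^j‖² = ‖P_{S_j}(x^j)‖² + ‖x^j - P_{S_j}(x^j)‖²`. Hence a point of `C`
supported on the blocks `U` is at squared distance at least `‖x‖² - ∑_{j ∈ U} ‖P_{S_j}(x^j)‖²`
from `x`, with equality for the blockwise projection restricted to `U`. Minimising the distance
therefore means maximising `∑_{j ∈ U} ‖P_{S_j}(x^j)‖²` over `#U ≤ s_G`, which the `s_G` blocks of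
largest norm do.
-/

open Finset

section NearestPoint

variable {E : Type*} [NormedAddCommGroup E] {S K : Set E} {y q : E}

lemma IsNearestPt.mono (h : IsNearestPt S y q) (hq : q ∈ K) (hK : K ⊆ S) : IsNearestPt K y q :=
  ⟨hq, fun w hw => h.2 w (hK hw)⟩

lemma IsNearestPt.norm_sub_eq_iInf (h : IsNearestPt S y q) : ‖y - q‖ = ⨅ w : S, ‖y - w‖ := by
  have : Nonempty S := ⟨⟨q, h.1⟩⟩
  refine le_antisymm (le_ciInf fun w => ?_) (ciInf_le ⟨0, ?_⟩ (⟨q, h.1⟩ : S))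
  · simpa only [dist_eq_norm] using h.2 w w.2
  · rintro _ ⟨w, rfl⟩
    exact norm_nonneg _

variable [InnerProductSpace ℝ E]

lemma IsNearestPt.inner_sub_self_eq_zero (h : IsNearestPt S y q)
    (hray : ∀ c : ℝ, 0 ≤ c → c • q ∈ S) : inner ℝ (y - q) q = 0 := by
  -- `q` is also nearest to `y` on the convex ray `ℝ≥0 • q`; the variational inequality there,
  -- tested at `0` and `2 • q`, gives both signs.
  set ray : Set E := LinearMap.toSpanSingleton ℝ E q '' Set.Ici 0
  have hq : q ∈ ray := ⟨1, Set.mem_Ici.2 zero_le_one, one_smul ℝ q⟩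
  have hray_sub : ray ⊆ S := by
    rintro _ ⟨c, hc, rfl⟩
    exact hray c hc
  have hvar := (norm_eq_iInf_iff_real_inner_le_zero ((convex_Ici 0).linear_image _) hq).1
    (h.mono hq hray_sub).norm_sub_eq_iInf
  have h0 := hvar 0 ⟨0, Set.mem_Ici.2 le_rfl, zero_smul ℝ q⟩
  have h2 := hvar ((2 : ℝ) • q) ⟨2, Set.mem_Ici.2 zero_le_two, rfl⟩
  rw [zero_sub, inner_neg_right] at h0
  rw [two_smul, add_sub_cancel_right] at h2
  linarith

lemma IsNearestPt.norm_sq_eq_add (h : IsNearestPt S y q) (hray : ∀ c : ℝ, 0 ≤ c → c • q ∈ S) :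
    ‖y‖ ^ 2 = ‖q‖ ^ 2 + ‖y - q‖ ^ 2 := by
  have := norm_add_sq_real q (y - q)
  rwa [add_sub_cancel, real_inner_comm, h.inner_sub_self_eq_zero hray, mul_zero, add_zero]
    at this

lemma IsNearestPt.norm_sq_sub_norm_sq_le (h : IsNearestPt S y q)
    (hray : ∀ c : ℝ, 0 ≤ c → c • q ∈ S) {w : E} (hw : w ∈ S) :
    ‖y‖ ^ 2 - ‖q‖ ^ 2 ≤ ‖y - w‖ ^ 2 := by
  rw [h.norm_sq_eq_add hray, add_sub_cancel_left]
  gcongr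
  simpa only [dist_eq_norm] using h.2 w hw

end NearestPoint

lemma Finset.sum_le_sum_of_card_le_of_forall_le {α M : Type*} [AddCommMonoid M] [LinearOrder M]
    [IsOrderedAddMonoid M] {w : α → M} (hw : ∀ a, 0 ≤ w a) {T U : Finset α} (hcard : #U ≤ #T)
    (htop : ∀ j ∈ T, ∀ k ∉ T, w k ≤ w j) : ∑ j ∈ U, w j ≤ ∑ j ∈ T, w j := by
  have hsdiff : #(U \ T) ≤ #(T \ U) := card_sdiff_le_card_sdiff_iff.2 hcard
  have key : ∑ j ∈ U \ T, w j ≤ ∑ j ∈ T \ U, w j := by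
    rcases (T \ U).eq_empty_or_nonempty with hTU | hTU
    · rw [hTU, card_empty, Nat.le_zero, card_eq_zero] at hsdiff
      rw [hsdiff, hTU]
    obtain ⟨v, hv, hvmin⟩ := (T \ U).exists_min_image w hTU
    calc ∑ j ∈ U \ T, w j ≤ #(U \ T) • w v :=
          sum_le_card_nsmul _ _ _ fun k hk => htop v (mem_sdiff.1 hv).1 k (mem_sdiff.1 hk).2
      _ ≤ #(T \ U) • w v := nsmul_le_nsmul_left (hw v) hsdiff
      _ ≤ ∑ j ∈ T \ U, w j := card_nsmul_le_sum _ _ _ hvmin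
  rw [← sum_inter_add_sum_sdiff U T, ← sum_inter_add_sum_sdiff T U, inter_comm]
  gcongr

section Blockwise

variable {ι : Type*} [Fintype ι] [DecidableEq ι] {E : ι → Type*} [∀ i, NormedAddCommGroup (E i)]

lemma PiLp.norm_sq_sub_sum_eq (x : PiLp 2 E) (U : Finset ι) (f : ι → ℝ) :
    ‖x‖ ^ 2 - ∑ i ∈ U, f i = ∑ i, (‖x i‖ ^ 2 - if i ∈ U then f i else 0) := by
  rw [PiLp.norm_sq_eq_of_L2, sum_sub_distrib, sum_ite_mem, univ_inter]

variable [∀ i, InnerProductSpace ℝ (E i)] {S : ∀ i, Set (E i)} {x pL : PiLp 2 E}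

lemma PiLp.norm_sub_ite_mem_sq (hpL : ∀ i, IsNearestPt (S i) (x i) (pL i))
    (hray : ∀ i, ∀ c : ℝ, 0 ≤ c → c • pL i ∈ S i) (U : Finset ι) :
    ‖x - WithLp.toLp 2 (fun i => if i ∈ U then pL i else 0)‖ ^ 2
      = ‖x‖ ^ 2 - ∑ i ∈ U, ‖pL i‖ ^ 2 := by
  rw [PiLp.norm_sq_sub_sum_eq, PiLp.norm_sq_eq_of_L2]
  refine sum_congr rfl fun i _ => ?_
  by_cases hi : i ∈ U
  · simp only [PiLp.sub_apply, hi, if_true, (hpL i).norm_sq_eq_add (hray i)]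
    ring
  · simp [hi]

lemma PiLp.norm_sq_sub_sum_le_norm_sub_sq (hpL : ∀ i, IsNearestPt (S i) (x i) (pL i))
    (hray : ∀ i, ∀ c : ℝ, 0 ≤ c → c • pL i ∈ S i) {β : PiLp 2 E} (hβ : ∀ i, β i ∈ S i)
    {U : Finset ι} (hβU : ∀ i ∉ U, β i = 0) : ‖x‖ ^ 2 - ∑ i ∈ U, ‖pL i‖ ^ 2 ≤ ‖x - β‖ ^ 2 := by
  rw [PiLp.norm_sq_sub_sum_eq, PiLp.norm_sq_eq_of_L2]
  refine sum_le_sum fun i _ => ?_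
  by_cases hi : i ∈ U
  · simpa only [PiLp.sub_apply, hi, if_true] using (hpL i).norm_sq_sub_norm_sq_le (hray i) (hβ i)
  · simp [hi, hβU i hi]

end Blockwise

theorem stmt_12_general {p : ℕ} (b : Fin p → ℕ) (sG : ℕ)
    (S : ∀ j : Fin p, Set (EuclideanSpace ℝ (Fin (b j))))
    (hScone : ∀ j, ∀ c : ℝ, 0 ≤ c → ∀ v ∈ S j, c • v ∈ S j)
    (x pL : PiLp 2 (fun j : Fin p => EuclideanSpace ℝ (Fin (b j))))
    (hpL : ∀ j, IsNearestPt (S j) (x j) (pL j))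
    (T : Finset (Fin p)) (hTcard : T.card = min sG p)
    (hTtop : ∀ j ∈ T, ∀ k ∉ T, ‖pL k‖ ≤ ‖pL j‖) :
    IsNearestPt
      {β : PiLp 2 (fun j : Fin p => EuclideanSpace ℝ (Fin (b j))) |
        (Finset.univ.filter fun j => β j ≠ 0).card ≤ sG ∧ ∀ j, β j ∈ S j}
      x (WithLp.toLp 2 (fun j => if j ∈ T then pL j else 0)) := by
  have hray : ∀ j, ∀ c : ℝ, 0 ≤ c → c • pL j ∈ S j := fun j c hc => hScone j c hc _ (hpL j).1
  refine ⟨⟨?_, fun j => ?_⟩, ?_⟩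
  · refine (card_le_card fun j hj => ?_).trans (hTcard.trans_le (min_le_left _ _))
    by_contra hjT
    simp [hjT] at hj
  · rw [WithLp.ofLp_toLp]
    split_ifs
    · exact (hpL j).1
    · simpa using hray j 0 le_rfl
  · rintro β ⟨hcard, hβS⟩
    set U := univ.filter fun j => β j ≠ 0
    have hUT : #U ≤ #T := hTcard ▸ le_min hcard ((card_le_univ U).trans_eq (Fintype.card_fin p))
    rw [dist_eq_norm, dist_eq_norm, ← sq_le_sq₀ (norm_nonneg _) (norm_nonneg _),
      PiLp.norm_sub_ite_mem_sq hpL hray]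
    calc ‖x‖ ^ 2 - ∑ j ∈ T, ‖pL j‖ ^ 2 ≤ ‖x‖ ^ 2 - ∑ j ∈ U, ‖pL j‖ ^ 2 :=
          sub_le_sub_left (sum_le_sum_of_card_le_of_forall_le (fun _ => sq_nonneg _) hUT
            fun j hj k hk => pow_le_pow_left₀ (norm_nonneg _) (hTtop j hj k hk) 2) _
      _ ≤ ‖x - β‖ ^ 2 :=
          PiLp.norm_sq_sub_sum_le_norm_sub_sq hpL hray hβS fun j hj => by simpa [U] using hj

/-- Projection onto the set of `s_G`-block-sparse vectors with blocks in closed cones `S_j`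
is given by blockwise cone projection followed by hard-thresholding the blocks of
largest norm. -/
theorem stmt_12 {p : ℕ} (b : Fin p → ℕ) (sG : ℕ)
    (S : ∀ j : Fin p, Set (EuclideanSpace ℝ (Fin (b j))))
    (hSclosed : ∀ j, IsClosed (S j)) (hS0 : ∀ j, (0 : EuclideanSpace ℝ (Fin (b j))) ∈ S j)
    (hScone : ∀ j, ∀ c : ℝ, 0 ≤ c → ∀ v ∈ S j, c • v ∈ S j)
    (x pL : PiLp 2 (fun j : Fin p => EuclideanSpace ℝ (Fin (b j))))
    (hpL : ∀ j, IsNearestPt (S j) (x j) (pL j))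
    (T : Finset (Fin p)) (hTcard : T.card = min sG p)
    (hTtop : ∀ j ∈ T, ∀ k ∉ T, ‖pL k‖ ≤ ‖pL j‖) :
    IsNearestPt
      {β : PiLp 2 (fun j : Fin p => EuclideanSpace ℝ (Fin (b j))) |
        (Finset.univ.filter fun j => β j ≠ 0).card ≤ sG ∧ ∀ j, β j ∈ S j}
      x (WithLp.toLp 2 (fun j => if j ∈ T then pL j else 0)) :=
  stmt_12_general b sG S hScone x pL hpL T hTcard hTtop
end

section
/- Let C ⊆ ℝ^d be a closed cone, and let β_★ ∈ C. Suppose L is differentiable and satisfies the restricted gradient correlation condition over C with parameters μ_R, ε_R where ε_R < 1/2, and suppose β_★ satisfies the first-order optimality condition inf_{w ∈ T, ‖w‖≤1} ⟨w, ∇L(β_★)⟩ ≥ 0 where T is the tangent cone of C at β_★. Assume further the projection bound ‖P_{C−{β_★}}(u)‖ ≤ 2‖P_T(u)‖ for all u. Then the projected gradient iterates β_{t+1} = P_C(β_t − μ_R ∇L(β_t)), started at β_0 = 0, satisfy ‖β_t − β_★‖ ≤ (2ε_R)^t ‖β_★‖ for all t ≥ 0. -/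
/-!
Write `z = βₜ - μ∇L(βₜ) - β★`, so that `βₜ₊₁ - β★ = P_C(z + β★) - β★`. For a unit vector `w` of
the tangent cone, `⟪w, z⟫` splits as the restricted-gradient-correlation defect at `(βₜ, β★)`,
which is at most `ε‖βₜ - β★‖`, minus `μ⟪w, ∇L(β★)⟫`, which is nonpositive by first-order
optimality. The projection bound therefore contracts the error by `2ε` in each step.
-/

open RealInnerProductSpace

section

variable {E : Type*} [NormedAddCommGroup E] [InnerProductSpace ℝ E]

theorem inner_gradStep_sub_le {g : E → E} {μ ε : ℝ} {x xs w : E}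
    (hμ : 0 ≤ μ) (hε : 0 ≤ ε) (hw : ‖w‖ ≤ 1)
    (hcorr : |⟪w, x - xs⟫ - μ * ⟪w, g x - g xs⟫| ≤ ε * ‖w‖ * ‖x - xs‖)
    (hopt : 0 ≤ ⟪w, g xs⟫) :
    ⟪w, x - μ • g x - xs⟫ ≤ ε * ‖x - xs‖ := by
  have hsplit : ⟪w, x - μ • g x - xs⟫ =
      (⟪w, x - xs⟫ - μ * ⟪w, g x - g xs⟫) - μ * ⟪w, g xs⟫ := by
    simp only [inner_sub_right, inner_smul_right]
    ring
  have hw' : ε * ‖w‖ * ‖x - xs‖ ≤ ε * ‖x - xs‖ := by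
    simpa using
      mul_le_mul_of_nonneg_right (mul_le_mul_of_nonneg_left hw hε) (norm_nonneg (x - xs))
  rw [hsplit]
  linarith [le_of_abs_le hcorr, mul_nonneg hμ hopt]

theorem norm_projGradStep_sub_le {T : Set E} {proj g : E → E} {μ ε : ℝ} {x xs : E}
    (hμ : 0 ≤ μ) (hε : 0 ≤ ε)
    (hcorr : ∀ w ∈ T, |⟪w, x - xs⟫ - μ * ⟪w, g x - g xs⟫| ≤ ε * ‖w‖ * ‖x - xs‖)
    (hopt : ∀ w ∈ T, ‖w‖ ≤ 1 → 0 ≤ ⟪w, g xs⟫)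
    (hprojT : ‖proj (x - μ • g x - xs + xs) - xs‖ ≤
      2 * sSup ((fun w => ⟪w, x - μ • g x - xs⟫) '' {w ∈ T | ‖w‖ ≤ 1})) :
    ‖proj (x - μ • g x) - xs‖ ≤ 2 * ε * ‖x - xs‖ := by
  have hsup : sSup ((fun w => ⟪w, x - μ • g x - xs⟫) '' {w ∈ T | ‖w‖ ≤ 1}) ≤ ε * ‖x - xs‖ :=
    Real.sSup_le (Set.forall_mem_image.2 fun w ⟨hwT, hw⟩ =>
      inner_gradStep_sub_le hμ hε hw (hcorr w hwT) (hopt w hwT hw)) (by positivity)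
  rw [sub_add_cancel] at hprojT
  linarith

end

theorem stmt_13_general {d : ℕ} (C : Set (EuclideanSpace ℝ (Fin d)))
    (hCcone : ∀ c : ℝ, 0 ≤ c → ∀ v ∈ C, c • v ∈ C)
    (βs : EuclideanSpace ℝ (Fin d)) (hβs : βs ∈ C)
    (gradL : EuclideanSpace ℝ (Fin d) → EuclideanSpace ℝ (Fin d))
    (μR εR : ℝ) (hμ : 0 < μR) (hε0 : 0 ≤ εR)
    (T : Set (EuclideanSpace ℝ (Fin d)))
    (hTsub : T ⊆ {z : EuclideanSpace ℝ (Fin d) | ∃ a ∈ C, ∃ b ∈ C, z = a - b})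
    (hRGC : ∀ v ∈ {z : EuclideanSpace ℝ (Fin d) | ∃ a ∈ C, ∃ b ∈ C, z = a - b},
      ∀ x ∈ C, ∀ y ∈ C,
      |⟪v, x - y⟫ - μR * ⟪v, gradL x - gradL y⟫| ≤ εR * ‖v‖ * ‖x - y‖)
    (hopt : ∀ w ∈ T, ‖w‖ ≤ 1 → 0 ≤ ⟪w, gradL βs⟫)
    (proj : EuclideanSpace ℝ (Fin d) → EuclideanSpace ℝ (Fin d))
    (hproj : ∀ u, proj u ∈ C ∧ ∀ q ∈ C, dist u (proj u) ≤ dist u q)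
    (hprojT : ∀ z : EuclideanSpace ℝ (Fin d),
      ‖proj (z + βs) - βs‖ ≤ 2 * sSup ((fun w => ⟪w, z⟫) '' {w ∈ T | ‖w‖ ≤ 1}))
    (β : ℕ → EuclideanSpace ℝ (Fin d)) (hβ0 : β 0 = 0)
    (hiter : ∀ t, β (t + 1) = proj (β t - μR • gradL (β t))) :
    ∀ t, ‖β t - βs‖ ≤ (2 * εR) ^ t * ‖βs‖ := by
  have hβC : ∀ t, β t ∈ C
    | 0 => by simpa [hβ0] using hCcone 0 le_rfl βs hβs
    | t + 1 => hiter t ▸ (hproj _).1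
  have hstep : ∀ t, ‖β (t + 1) - βs‖ ≤ 2 * εR * ‖β t - βs‖ := fun t =>
    hiter t ▸ norm_projGradStep_sub_le hμ.le hε0
      (fun w hw => hRGC w (hTsub hw) _ (hβC t) _ hβs) hopt (hprojT _)
  intro t
  simpa [hβ0] using le_geom (u := fun t => ‖β t - βs‖) (by positivity) t fun k _ => hstep k

/-- Linear convergence of projected gradient descent under the restricted gradient
correlation condition with `ε_R < 1/2`: starting from `β₀ = 0`, the iterates
`β_{t+1} = P_C(β_t − μ_R ∇L(β_t))` satisfy `‖β_t − β_★‖ ≤ (2ε_R)^t ‖β_★‖`. -/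
theorem stmt_13 {d : ℕ} (C : Set (EuclideanSpace ℝ (Fin d)))
    (hCclosed : IsClosed C)
    (hCcone : ∀ c : ℝ, 0 ≤ c → ∀ v ∈ C, c • v ∈ C)
    (βs : EuclideanSpace ℝ (Fin d)) (hβs : βs ∈ C)
    (L : EuclideanSpace ℝ (Fin d) → ℝ)
    (gradL : EuclideanSpace ℝ (Fin d) → EuclideanSpace ℝ (Fin d))
    (hgrad : ∀ x, HasGradientAt L (gradL x) x)
    (μR εR : ℝ) (hμ : 0 < μR) (hε0 : 0 ≤ εR) (hεhalf : εR < 1 / 2)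
    (T : Set (EuclideanSpace ℝ (Fin d)))
    (hTsub : T ⊆ {z : EuclideanSpace ℝ (Fin d) | ∃ a ∈ C, ∃ b ∈ C, z = a - b})
    (hRGC : ∀ v ∈ {z : EuclideanSpace ℝ (Fin d) | ∃ a ∈ C, ∃ b ∈ C, z = a - b},
      ∀ x ∈ C, ∀ y ∈ C,
      |⟪v, x - y⟫ - μR * ⟪v, gradL x - gradL y⟫| ≤ εR * ‖v‖ * ‖x - y‖)
    (hopt : ∀ w ∈ T, ‖w‖ ≤ 1 → 0 ≤ ⟪w, gradL βs⟫)
    (proj : EuclideanSpace ℝ (Fin d) → EuclideanSpace ℝ (Fin d))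
    (hproj : ∀ u, proj u ∈ C ∧ ∀ q ∈ C, dist u (proj u) ≤ dist u q)
    (hprojT : ∀ z : EuclideanSpace ℝ (Fin d),
      ‖proj (z + βs) - βs‖ ≤ 2 * sSup ((fun w => ⟪w, z⟫) '' {w ∈ T | ‖w‖ ≤ 1}))
    (β : ℕ → EuclideanSpace ℝ (Fin d)) (hβ0 : β 0 = 0)
    (hiter : ∀ t, β (t + 1) = proj (β t - μR • gradL (β t))) :
    ∀ t, ‖β t - βs‖ ≤ (2 * εR) ^ t * ‖βs‖ :=
  stmt_13_general C hCcone βs hβs gradL μR εR hμ hε0 T hTsub hRGC hopt proj hproj hprojT β hβ0 hiter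
end
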